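/- arXiv:2407.11791 — 6 statements merged into one kernel-verified Lean document; each statement's English description precedes it below -/
import Mathlib

section
/- Let k be a field and G a totally ordered abelian group. Then there exist a field Q and a surjective valuation ν : Q → G ∪ {∞} such that the residue field R_ν/m_ν of its valuation ring is isomorphic to k. In particular, for every field k and totally ordered abelian group G there is a valuation domain with value group order-isomorphic to G and residue field isomorphic to k. -/
/-!
The Hahn series field `k⟦G⟧` with the valuation `orderTop` does it: `single g 1` has value `g`,
and taking the coefficient at `0` is a surjective ring map from the valuation ring onto `k`
whose kernel is exactly the set of series of positive order.
-/

namespace HahnSeries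

variable {Γ R : Type*}

section coeffZero
variable [AddCommMonoid Γ] [LinearOrder Γ] [IsOrderedCancelAddMonoid Γ]
  [NonUnitalNonAssocSemiring R]

theorem coeff_zero_mul_of_orderTop_nonneg {x y : R⟦Γ⟧} (hx : 0 ≤ x.orderTop)
    (hy : 0 ≤ y.orderTop) : (x * y).coeff 0 = x.coeff 0 * y.coeff 0 := by
  rcases (zero_le_orderTop_iff.1 hx).lt_or_eq with hx' | hx'
  · have hxy : 0 < (x * y).orderTop :=
      (add_pos_of_pos_of_nonneg (zero_lt_orderTop_of_order hx') hy).trans_le orderTop_add_le_mul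
    rw [coeff_eq_zero_of_lt_orderTop hxy, coeff_eq_zero_of_lt_order hx', zero_mul]
  rcases (zero_le_orderTop_iff.1 hy).lt_or_eq with hy' | hy'
  · have hxy : 0 < (x * y).orderTop := by
      refine lt_of_lt_of_le ?_ orderTop_add_le_mul
      rw [add_comm]
      exact add_pos_of_pos_of_nonneg (zero_lt_orderTop_of_order hy') hx
    rw [coeff_eq_zero_of_lt_orderTop hxy, coeff_eq_zero_of_lt_order hy', mul_zero]
  simpa [← hx', ← hy', leadingCoeff_eq] using coeff_mul_order_add_order x y

end coeffZero

section integer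
variable [AddCommGroup Γ] [LinearOrder Γ] [IsOrderedAddMonoid Γ] [Ring R] [IsDomain R]

theorem mem_integer_addVal_iff {x : R⟦Γ⟧} : x ∈ (addVal Γ R).integer ↔ 0 ≤ x.orderTop := Iff.rfl

def integerConstantCoeff : (addVal Γ R).integer →+* R where
  toFun x := (x : R⟦Γ⟧).coeff 0
  map_one' := by simp
  map_mul' x y := coeff_zero_mul_of_orderTop_nonneg x.2 y.2
  map_zero' := rfl
  map_add' _ _ := rfl

theorem integerConstantCoeff_surjective :
    Function.Surjective (integerConstantCoeff (Γ := Γ) (R := R)) :=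
  fun r => ⟨⟨single 0 r, orderTop_single_le⟩, coeff_single_same 0 r⟩

theorem integerConstantCoeff_eq_zero_iff {x : (addVal Γ R).integer} :
    integerConstantCoeff x = 0 ↔ 0 < (x : R⟦Γ⟧).orderTop :=
  ⟨fun h => x.2.lt_of_ne fun h' => coeff_orderTop_ne h'.symm h, coeff_eq_zero_of_lt_orderTop⟩

end integer
end HahnSeries

/-- Let `k` be a field and `G` a totally ordered abelian group. Then there
exist a field `Q` and a surjective valuation `ν : Q → G ∪ {∞}` such that the residue field
`R_ν/m_ν` of its valuation ring is isomorphic to `k`. -/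
theorem statement_0 (k : Type u) [Field k] (G : Type v) [AddCommGroup G] [LinearOrder G] [IsOrderedAddMonoid G] :
    ∃ (Q : Type (max u v)) (_ : Field Q) (ν : Q → WithTop G),
      (∀ x : Q, ν x = ⊤ ↔ x = 0) ∧
      (∀ x y : Q, ν (x * y) = ν x + ν y) ∧
      (∀ x y : Q, min (ν x) (ν y) ≤ ν (x + y)) ∧
      (∀ g : G, ∃ x : Q, ν x = (g : WithTop G)) ∧
      ∃ R : Subring Q, (∀ x : Q, x ∈ R ↔ 0 ≤ ν x) ∧
        ∃ m : Ideal R, (∀ r : R, r ∈ m ↔ 0 < ν (r : Q)) ∧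
          Nonempty ((↥R ⧸ m) ≃+* k) := by
  open HahnSeries in
  exact ⟨k⟦G⟧, inferInstance, orderTop, fun _ => orderTop_eq_top, fun x y => orderTop_mul x y,
    fun _ _ => min_orderTop_le_orderTop_add, fun g => ⟨single g 1, orderTop_single one_ne_zero⟩,
    (addVal G k).integer, fun _ => mem_integer_addVal_iff,
    RingHom.ker integerConstantCoeff, fun _ => RingHom.mem_ker.trans integerConstantCoeff_eq_zero_iff,
    ⟨RingHom.quotientKerEquivOfSurjective integerConstantCoeff_surjective⟩⟩
end

section
/- Let k be a field and G, H totally ordered abelian groups, and let G ×ₗ H be their lexicographic product. Then there is a field isomorphism ψ̄ : Q_k(G ×ₗ H) → Q_{Q_k(H)}(G) induced by Σᵢ cᵢ t^{(gᵢ,hᵢ)} ↦ Σᵢ (cᵢ t^{hᵢ}) t^{gᵢ} (the fraction field of the group algebra of G over the field Q_k(H)). Moreover, there is a surjective valuation ν : Q_{Q_k(H)}(G) → (G ×ₗ H) ∪ {∞} with ν_{G×ₗH} = ν ∘ ψ̄; in particular R_k(G ×ₗ H) is isomorphic as a ring to the valuation ring R_ν = {x : ν(x) ≥ 0}. -/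
set_option synthInstance.maxHeartbeats 1000000
set_option maxHeartbeats 1000000
universe u v w

instance addMonoidAlgebraIsDomain (k : Type*) [Field k] (G : Type*)
    [AddCommGroup G] [LinearOrder G] [IsOrderedAddMonoid G] : IsDomain (AddMonoidAlgebra k G) :=
  NoZeroDivisors.to_isDomain _

/-!
The isomorphism `ψ̄` is the composite of `k[G ×ₗ H] ≅ k[H][G]` (currying) with the inclusion
`k[H][G] ⊆ Q_k(H)[G]` obtained by mapping coefficients into the fraction field. For a domain `R`
with fraction field `K`, the inclusion `R[G] ⊆ K[G]` induces an isomorphism of fraction fields: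
the induced field map is injective, and it is surjective because `K[G]` maps back into
`Frac R[G]` (send `c t^g` to `c · t^g`, with `c ∈ K ⊆ Frac R[G]`) compatibly with it.
The valuation `ν` is `ν_{G×ₗH} ∘ ψ̄⁻¹`, so `ψ̄` restricts to an isomorphism of valuation rings.
-/

open AddMonoidAlgebra

namespace AddMonoidAlgebra

variable {R K G : Type*} [CommRing R] [IsDomain R] [Field K] [Algebra R K] [IsFractionRing R K]
  [AddCommMonoid G] [UniqueSums G]

variable (R K G) in
noncomputable def fractionRingMap : FractionRing R[G] →+* FractionRing K[G] :=
  IsFractionRing.lift (g := (algebraMap K[G] _).comp (mapRingHom G (algebraMap R K)))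
    ((IsFractionRing.injective K[G] _).comp (map_injective _ (IsFractionRing.injective R K)))

theorem fractionRingMap_algebraMap (x : R[G]) :
    fractionRingMap R K G (algebraMap R[G] (FractionRing R[G]) x) =
      algebraMap K[G] _ (mapRingHom G (algebraMap R K) x) :=
  IsFractionRing.lift_algebraMap _ _

variable (R G) in
noncomputable def fractionRingConst : K →+* FractionRing R[G] :=
  IsFractionRing.lift (g := (algebraMap R[G] (FractionRing R[G])).comp singleZeroRingHom)
    ((IsFractionRing.injective R[G] _).comp single_right_injective)

theorem fractionRingMap_comp_fractionRingConst :
    (fractionRingMap R K G).comp (fractionRingConst R G) =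
      (algebraMap K[G] (FractionRing K[G])).comp singleZeroRingHom :=
  IsLocalization.ringHom_ext (nonZeroDivisors R) <| RingHom.ext fun r ↦ by
    simp [fractionRingConst, fractionRingMap_algebraMap]

variable (R G) in
noncomputable def liftFractionCoeffs : K[G] →+* FractionRing R[G] :=
  liftNCRingHom (fractionRingConst R G)
    ((algebraMap R[G] (FractionRing R[G]) : R[G] →* _).comp (of R G))
    fun _ _ ↦ Commute.all _ _

theorem liftFractionCoeffs_single (g : G) (c : K) :
    liftFractionCoeffs R G (single g c) =
      fractionRingConst R G c * algebraMap R[G] _ (single g 1) :=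
  liftNC_single _ _ _ _

theorem fractionRingMap_comp_liftFractionCoeffs :
    (fractionRingMap R K G).comp (liftFractionCoeffs R G) =
      algebraMap K[G] (FractionRing K[G]) := by
  refine ringHom_ext (fun c ↦ ?_) (fun g ↦ ?_)
  · simpa [liftFractionCoeffs_single, ← one_def] using
      RingHom.congr_fun fractionRingMap_comp_fractionRingConst c
  · simp [liftFractionCoeffs_single, fractionRingMap_algebraMap]

theorem fractionRingMap_surjective :
    Function.Surjective (fractionRingMap R K G) := by
  intro z
  obtain ⟨x, y, -, rfl⟩ := IsFractionRing.div_surjective K[G] z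
  refine ⟨liftFractionCoeffs R G x / liftFractionCoeffs R G y, ?_⟩
  simp only [map_div₀, ← RingHom.comp_apply, fractionRingMap_comp_liftFractionCoeffs]

variable (R K G) in
noncomputable def fractionRingMapEquiv : FractionRing R[G] ≃+* FractionRing K[G] :=
  .ofBijective (fractionRingMap R K G)
    ⟨(fractionRingMap R K G).injective, fractionRingMap_surjective⟩

theorem fractionRingMapEquiv_algebraMap (x : R[G]) :
    fractionRingMapEquiv R K G (algebraMap R[G] (FractionRing R[G]) x) =
      algebraMap K[G] _ (mapRingHom G (algebraMap R K) x) :=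
  fractionRingMap_algebraMap x

end AddMonoidAlgebra

noncomputable def lexCurryRingEquiv (k G H : Type*) [Semiring k] [AddMonoid G] [AddMonoid H] :
    k[G ×ₗ H] ≃+* k[H][G] :=
  (mapDomainRingEquiv k (ofLexAddEquiv (G × H))).trans curryRingEquiv

section Lex

variable (k : Type*) [Field k] (G H : Type*)
  [AddCommGroup G] [LinearOrder G] [IsOrderedAddMonoid G]
  [AddCommGroup H] [LinearOrder H] [IsOrderedAddMonoid H]

noncomputable def fractionRingLexEquiv :
    FractionRing k[G ×ₗ H] ≃+* FractionRing (FractionRing k[H])[G] :=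
  (IsFractionRing.ringEquivOfRingEquiv (lexCurryRingEquiv k G H)).trans
    (fractionRingMapEquiv k[H] (FractionRing k[H]) G)

theorem fractionRingLexEquiv_algebraMap_single (g : G) (h : H) (c : k) :
    fractionRingLexEquiv k G H (algebraMap k[G ×ₗ H] _ (single (toLex (g, h)) c)) =
      algebraMap (FractionRing k[H])[G] _
        (single g (algebraMap k[H] (FractionRing k[H]) (single h c))) := by
  simp [fractionRingLexEquiv, lexCurryRingEquiv, fractionRingMapEquiv_algebraMap]

end Lex

namespace AddValuation

variable {R Γ : Type*} [Ring R] [LinearOrderedAddCommMonoidWithTop Γ] (v : AddValuation R Γ)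

def integer : Subring R where
  carrier := {x | 0 ≤ v x}
  zero_mem' := by simp
  one_mem' := by simp
  add_mem' hx hy := (le_min hx hy).trans (v.map_add _ _)
  mul_mem' hx hy := by simpa [v.map_mul] using add_nonneg hx hy
  neg_mem' hx := by simpa [v.map_neg] using hx

theorem mem_integer_iff {x : R} : x ∈ v.integer ↔ 0 ≤ v x :=
  Iff.rfl

end AddValuation

/-- Let `k` be a field, `G`, `H` totally ordered abelian groups, and
`G ×ₗ H` their lexicographic product.  Let `ν_{G×ₗH}` be the canonical valuation of
`Q_k(G ×ₗ H)`.  Then there is a field isomorphism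
`ψ̄ : Q_k(G ×ₗ H) → Q_{Q_k(H)}(G)` induced by `Σ cᵢ t^{(gᵢ,hᵢ)} ↦ Σ (cᵢ t^{hᵢ}) t^{gᵢ}`;
there is a surjective valuation `ν : Q_{Q_k(H)}(G) → (G ×ₗ H) ∪ {∞}` with
`ν_{G×ₗH} = ν ∘ ψ̄`; and `R_k(G ×ₗ H)` is isomorphic as a ring to the valuation ring
`R_ν = {x : ν x ≥ 0}`. -/
theorem statement_6 (k : Type u) [Field k] (G : Type v) (H : Type w)
    [AddCommGroup G] [LinearOrder G] [IsOrderedAddMonoid G]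
    [AddCommGroup H] [LinearOrder H] [IsOrderedAddMonoid H]
    (νGH : FractionRing (AddMonoidAlgebra k (G ×ₗ H)) → WithTop (G ×ₗ H))
    (hνGH0 : ∀ x, νGH x = ⊤ ↔ x = 0)
    (hνGHmul : ∀ x y, νGH (x * y) = νGH x + νGH y)
    (hνGHadd : ∀ x y, min (νGH x) (νGH y) ≤ νGH (x + y))
    (hνGHgen : ∀ p : AddMonoidAlgebra k (G ×ₗ H),
      νGH (algebraMap (AddMonoidAlgebra k (G ×ₗ H))
          (FractionRing (AddMonoidAlgebra k (G ×ₗ H))) p) = p.coeff.support.min) :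
    ∃ ψ : FractionRing (AddMonoidAlgebra k (G ×ₗ H)) ≃+*
        FractionRing (AddMonoidAlgebra (FractionRing (AddMonoidAlgebra k H)) G),
      (∀ (g : G) (h : H) (c : k),
        ψ (algebraMap (AddMonoidAlgebra k (G ×ₗ H))
            (FractionRing (AddMonoidAlgebra k (G ×ₗ H)))
            (AddMonoidAlgebra.single (toLex (g, h)) c)) =
          algebraMap (AddMonoidAlgebra (FractionRing (AddMonoidAlgebra k H)) G)
            (FractionRing (AddMonoidAlgebra (FractionRing (AddMonoidAlgebra k H)) G))
            (AddMonoidAlgebra.single g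
              (algebraMap (AddMonoidAlgebra k H) (FractionRing (AddMonoidAlgebra k H))
                (AddMonoidAlgebra.single h c)))) ∧
      ∃ ν : FractionRing (AddMonoidAlgebra (FractionRing (AddMonoidAlgebra k H)) G) →
          WithTop (G ×ₗ H),
        (∀ x, ν x = ⊤ ↔ x = 0) ∧
        (∀ x y, ν (x * y) = ν x + ν y) ∧
        (∀ x y, min (ν x) (ν y) ≤ ν (x + y)) ∧
        (∀ w : G ×ₗ H, ∃ x, ν x = (w : WithTop (G ×ₗ H))) ∧
        (∀ x, νGH x = ν (ψ x)) ∧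
        ∃ (RA : Subring (FractionRing (AddMonoidAlgebra k (G ×ₗ H))))
          (RB : Subring
            (FractionRing (AddMonoidAlgebra (FractionRing (AddMonoidAlgebra k H)) G))),
          (∀ x, x ∈ RA ↔ 0 ≤ νGH x) ∧ (∀ x, x ∈ RB ↔ 0 ≤ ν x) ∧
          Nonempty (RA ≃+* RB) := by
  let ψ := fractionRingLexEquiv k G H
  have hν1 : νGH 1 = 0 :=
    (WithTop.add_left_inj (mt (hνGH0 1).1 one_ne_zero)).1 (by rw [← hνGHmul, mul_one, add_zero])
  let v : AddValuation _ (WithTop (G ×ₗ H)) := .of νGH ((hνGH0 0).2 rfl) hν1 hνGHadd hνGHmul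
  let ν := v.comap ψ.symm.toRingHom
  have hν (x) : ν x = νGH (ψ.symm x) := rfl
  refine ⟨ψ, fractionRingLexEquiv_algebraMap_single k G H, ν, fun _ ↦ ν.top_iff, ν.map_mul,
    ν.map_add, fun w ↦ ⟨ψ (algebraMap _ _ (single w (1 : k))), ?_⟩, fun _ ↦ by simp [hν],
    v.integer, ν.integer, fun _ ↦ Iff.rfl, fun _ ↦ Iff.rfl,
    ⟨ψ.restrict v.integer ν.integer fun x ↦ by simp [AddValuation.mem_integer_iff, hν, v]⟩⟩
  simp [hν, hνGHgen, Finsupp.support_single]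
end

section
/- Let R be a valuation domain, and let i₁ ⊆ p₁ and i₂ ⊆ p₂ be pairs of prime ideals of R with i₁ and i₂ idempotent (iₜ·iₜ = iₜ). Then there exists a ring homomorphism R_{p₁}/i₁R_{p₁} → R_{p₂}/i₂R_{p₂} commuting with the canonical maps from R if and only if i₁ ⊆ i₂ and p₂ ⊆ p₁. -/
universe u

/-!
Elements outside `p₁` stay invertible in `R_{p₂}` when `p₂ ⊆ p₁`, so the universal properties
of localization and of the quotient produce the map. Conversely, a compatible map kills the
image of `i₁`, and `i₂R_{p₂}` contracts to `i₂` because `i₂` is a prime inside `p₂`. An element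
of `p₂ \ p₁` would be a unit in `R_{p₁}/i₁R_{p₁}` whose image lies in the maximal ideal of the
local ring `R_{p₂}/i₂R_{p₂}`.
-/

open Ideal.Quotient (mk)

namespace IsLocalization.AtPrime

variable {R : Type*} [CommRing R]

section OneLocalization

variable {S : Type*} [CommRing S] [Algebra R S] (p : Ideal R) [p.IsPrime]
  [IsLocalization.AtPrime S p]

theorem under_map_of_le {I : Ideal R} [I.IsPrime] (hI : I ≤ p) :
    (I.map (algebraMap R S)).under R = I :=
  IsLocalization.under_map_of_isPrime_disjoint p.primeCompl S ‹_›
    (Set.disjoint_left.mpr fun _ hx hxI => hx (hI hxI))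

theorem isUnit_mk_algebraMap_iff {J : Ideal R} (hJ : J ≤ p) (r : R) :
    IsUnit (mk (J.map (algebraMap R S)) (algebraMap R S r)) ↔ r ∉ p := by
  have : IsLocalRing S := isLocalRing S p
  have hJ_le : J.map (algebraMap R S) ≤ Ideal.jacobson ⊥ := by
    rw [IsLocalRing.jacobson_eq_maximalIdeal ⊥ bot_ne_top, ← map_eq_maximalIdeal p S]
    exact Ideal.map_mono hJ
  have := isLocalHom_of_le_jacobson_bot _ hJ_le
  rw [isUnit_map_iff, isUnit_to_map_iff S p, Ideal.mem_primeCompl_iff]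

end OneLocalization

variable {S₁ S₂ : Type*} [CommRing S₁] [CommRing S₂] [Algebra R S₁] [Algebra R S₂]
  {p₁ p₂ : Ideal R} [p₁.IsPrime] [p₂.IsPrime]
  [IsLocalization.AtPrime S₁ p₁] [IsLocalization.AtPrime S₂ p₂]

theorem isUnit_algebraMap_of_le (hp : p₂ ≤ p₁) (s : p₁.primeCompl) :
    IsUnit (algebraMap R S₂ s) :=
  (isUnit_to_map_iff S₂ p₂ s).mpr fun hs => s.2 (hp hs)

noncomputable def quotientMapOfLE {I₁ I₂ : Ideal R} (hI : I₁ ≤ I₂) (hp : p₂ ≤ p₁) :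
    S₁ ⧸ I₁.map (algebraMap R S₁) →+* S₂ ⧸ I₂.map (algebraMap R S₂) :=
  Ideal.quotientMap _ (IsLocalization.lift (M := p₁.primeCompl) (isUnit_algebraMap_of_le hp))
    (by
      rw [← Ideal.map_le_iff_le_comap, Ideal.map_map, IsLocalization.lift_comp]
      exact Ideal.map_mono hI)

theorem quotientMapOfLE_mk {I₁ I₂ : Ideal R} (hI : I₁ ≤ I₂) (hp : p₂ ≤ p₁) (r : R) :
    quotientMapOfLE (S₁ := S₁) (S₂ := S₂) hI hp (mk _ (algebraMap R S₁ r)) =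
      mk _ (algebraMap R S₂ r) := by
  rw [quotientMapOfLE, Ideal.quotientMap_mk, IsLocalization.lift_eq]

theorem ideal_le_of_map_mk_algebraMap_eq {I₁ I₂ : Ideal R} [I₂.IsPrime] (hI₂ : I₂ ≤ p₂)
    (φ : S₁ ⧸ I₁.map (algebraMap R S₁) →+* S₂ ⧸ I₂.map (algebraMap R S₂))
    (hφ : ∀ r, φ (mk _ (algebraMap R S₁ r)) = mk _ (algebraMap R S₂ r)) : I₁ ≤ I₂ := by
  intro r hr
  rw [← under_map_of_le p₂ (S := S₂) hI₂, Ideal.under_def, Ideal.mem_comap,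
    ← Ideal.Quotient.eq_zero_iff_mem, ← hφ,
    Ideal.Quotient.eq_zero_iff_mem.mpr (Ideal.mem_map_of_mem _ hr), map_zero]

theorem prime_le_of_map_mk_algebraMap_eq {I₁ I₂ : Ideal R} (hI₂ : I₂ ≤ p₂)
    (φ : S₁ ⧸ I₁.map (algebraMap R S₁) →+* S₂ ⧸ I₂.map (algebraMap R S₂))
    (hφ : ∀ r, φ (mk _ (algebraMap R S₁ r)) = mk _ (algebraMap R S₂ r)) : p₂ ≤ p₁ := by
  intro r hr
  by_contra hr₁
  have hunit : IsUnit (mk (I₁.map (algebraMap R S₁)) (algebraMap R S₁ r)) :=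
    ((isUnit_to_map_iff S₁ p₁ r).mpr hr₁).map _
  exact (isUnit_mk_algebraMap_iff p₂ hI₂ r).mp (hφ r ▸ hunit.map φ) hr

end IsLocalization.AtPrime

theorem statement_8_general (R : Type u) [CommRing R]
    (i₁ i₂ p₁ p₂ : Ideal R) [i₂.IsPrime] [p₁.IsPrime] [p₂.IsPrime]
    (h₂ : i₂ ≤ p₂) :
    (∃ φ : (Localization.AtPrime p₁ ⧸
          i₁.map (algebraMap R (Localization.AtPrime p₁))) →+*
        (Localization.AtPrime p₂ ⧸ i₂.map (algebraMap R (Localization.AtPrime p₂))),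
      ∀ r : R,
        φ (Ideal.Quotient.mk (i₁.map (algebraMap R (Localization.AtPrime p₁)))
            (algebraMap R (Localization.AtPrime p₁) r)) =
          Ideal.Quotient.mk (i₂.map (algebraMap R (Localization.AtPrime p₂)))
            (algebraMap R (Localization.AtPrime p₂) r)) ↔
    (i₁ ≤ i₂ ∧ p₂ ≤ p₁) := by
  open IsLocalization.AtPrime in
  exact ⟨fun ⟨φ, hφ⟩ =>
      ⟨ideal_le_of_map_mk_algebraMap_eq h₂ φ hφ, prime_le_of_map_mk_algebraMap_eq h₂ φ hφ⟩,
    fun ⟨hI, hp⟩ => ⟨quotientMapOfLE hI hp, quotientMapOfLE_mk hI hp⟩⟩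

/-- Let `R` be a valuation domain and `i₁ ⊆ p₁`, `i₂ ⊆ p₂` pairs of prime
ideals of `R` with `i₁`, `i₂` idempotent.  Then there exists a ring homomorphism
`R_{p₁}/i₁R_{p₁} → R_{p₂}/i₂R_{p₂}` commuting with the canonical maps from `R` if and only
if `i₁ ⊆ i₂` and `p₂ ⊆ p₁`. -/
theorem statement_8 (R : Type u) [CommRing R] [IsDomain R]
    (hchain : ∀ I J : Ideal R, I ≤ J ∨ J ≤ I)
    (i₁ i₂ p₁ p₂ : Ideal R) [i₁.IsPrime] [i₂.IsPrime] [p₁.IsPrime] [p₂.IsPrime]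
    (h₁ : i₁ ≤ p₁) (h₂ : i₂ ≤ p₂) (hi₁ : i₁ * i₁ = i₁) (hi₂ : i₂ * i₂ = i₂) :
    (∃ φ : (Localization.AtPrime p₁ ⧸
          i₁.map (algebraMap R (Localization.AtPrime p₁))) →+*
        (Localization.AtPrime p₂ ⧸ i₂.map (algebraMap R (Localization.AtPrime p₂))),
      ∀ r : R,
        φ (Ideal.Quotient.mk (i₁.map (algebraMap R (Localization.AtPrime p₁)))
            (algebraMap R (Localization.AtPrime p₁) r)) =
          Ideal.Quotient.mk (i₂.map (algebraMap R (Localization.AtPrime p₂)))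
            (algebraMap R (Localization.AtPrime p₂) r)) ↔
    (i₁ ≤ i₂ ∧ p₂ ≤ p₁) :=
  statement_8_general R i₁ i₂ p₁ p₂ h₂
end

section
/- Let n ≥ 1, ℓ ≥ 2, and idem : {1,…,n} → {0,1} any map. For 1 ≤ i ≤ n set G_i = ℤ if idem(i) = 0 and G_i = ℤ[1/ℓ] if idem(i) = 1, and let G = G₁ ×ₗ ⋯ ×ₗ Gₙ be the lexicographic product. Then the prime filters in G⁺ are exactly the pairwise distinct sets F₁, …, Fₙ, and F_j is idempotent if and only if idem(j) = 1. -/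
open scoped Pointwise

universe v

/-- `ℤ[1/ℓ]` as an additive subgroup of `ℚ`. -/
def zInvSubgroup (ℓ : ℕ) (hℓ : 2 ≤ ℓ) : AddSubgroup ℚ where
  carrier := {q | ∃ (n : ℤ) (m : ℕ), q = (n : ℚ) / (ℓ : ℚ) ^ m}
  zero_mem' := ⟨0, 0, by simp⟩
  add_mem' := by
    rintro a b ⟨n, m, rfl⟩ ⟨n', m', rfl⟩
    refine ⟨n * (ℓ : ℤ) ^ m' + n' * (ℓ : ℤ) ^ m, m + m', ?_⟩
    have h0 : (ℓ : ℚ) ≠ 0 := by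
      have h1 : (0 : ℕ) < ℓ := by omega
      exact_mod_cast h1.ne'
    rw [div_add_div _ _ (pow_ne_zero m h0) (pow_ne_zero m' h0), pow_add]
    push_cast
    ring_nf
  neg_mem' := by
    rintro a ⟨n, m, rfl⟩
    exact ⟨-n, m, by push_cast; ring⟩

/-- `ℤ` as an additive subgroup of `ℚ`. -/
def zIntSubgroup : AddSubgroup ℚ where
  carrier := {q | ∃ n : ℤ, q = (n : ℚ)}
  zero_mem' := ⟨0, by simp⟩
  add_mem' := by
    rintro a b ⟨x, rfl⟩ ⟨y, rfl⟩
    exact ⟨x + y, by push_cast; ring⟩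
  neg_mem' := by
    rintro a ⟨x, rfl⟩
    exact ⟨-x, by push_cast; ring⟩

/-- The group `G_i`: `ℤ` if `idem i = 0` and `ℤ[1/ℓ]` if `idem i = 1`. -/
def mixedSubgroup {n : ℕ} (ℓ : ℕ) (hℓ : 2 ≤ ℓ) (idem : Fin n → Bool) (i : Fin n) :
    AddSubgroup ℚ :=
  if idem i then zInvSubgroup ℓ hℓ else zIntSubgroup

noncomputable instance finPiLex (n : ℕ) (β : Fin n → Type v)
    [∀ i, AddCommGroup (β i)] [∀ i, LinearOrder (β i)] [∀ i, IsOrderedAddMonoid (β i)] :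
    IsOrderedAddMonoid (Lex (∀ i, β i)) :=
  letI : WellFoundedLT (Fin n) := inferInstance
  inferInstance

/-- The subset `F_j = {v ∈ G⁺ : v ≠ 0, supp v ≤ j}` of the lexicographic product. -/
def suppFilter {n : ℕ} (β : Fin n → Type v) [∀ i, AddCommGroup (β i)]
    [∀ i, LinearOrder (β i)] [∀ i, IsOrderedAddMonoid (β i)]
    (j : Fin n) : Set (Lex (∀ i, β i)) :=
  {v | 0 ≤ v ∧ ∃ i ≤ j, ofLex v i ≠ 0}

/-! The leading index of a nonzero `v` is the least `i` with `v i ≠ 0`. A prime filter `F` is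
`F_j` for `j` the largest leading index of its elements: an element with a smaller leading index
dominates an element of `F`, and by the archimedean property so does some multiple `m • w` of
an element `w` with leading index `j`; since `F` is prime, `m • w ∈ F` forces `w ∈ F`.
The filter `F_j` is idempotent exactly when the `j`-th factor has no least positive element:
writing `v ∈ F_j` as a sum of two elements of `F_j` amounts to splitting off a positive `j`-th
coordinate, which for leading index `j` has to be smaller than `v j`. -/

section PrimeFilter

variable {G : Type*} [AddCommGroup G] [PartialOrder G]

structure IsPrimeFilter (F : Set G) : Prop where
  nonempty : F.Nonempty
  nonneg : ∀ v ∈ F, 0 ≤ v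
  upward : ∀ v ∈ F, ∀ w, v ≤ w → w ∈ F
  ne_nonneg : F ≠ {v | 0 ≤ v}
  add_notMem : ∀ v w, 0 ≤ v → 0 ≤ w → v ∉ F → w ∉ F → v + w ∉ F

namespace IsPrimeFilter

variable {F : Set G}

theorem zero_notMem (hF : IsPrimeFilter F) : (0 : G) ∉ F := fun h0 =>
  hF.ne_nonneg <| Set.Subset.antisymm hF.nonneg fun w hw => hF.upward 0 h0 w hw

theorem nsmul_notMem [IsOrderedAddMonoid G] (hF : IsPrimeFilter F) {w : G} (hw : 0 ≤ w)
    (hwF : w ∉ F) (m : ℕ) : m • w ∉ F := by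
  induction m with
  | zero => simpa using hF.zero_notMem
  | succ m ih => simpa [succ_nsmul] using hF.add_notMem _ _ (nsmul_nonneg hw m) hw ih hwF

theorem mem_of_le_nsmul [IsOrderedAddMonoid G] (hF : IsPrimeFilter F) {v w : G} (hv : v ∈ F)
    (hw : 0 ≤ w) {m : ℕ} (hvw : v ≤ m • w) : w ∈ F :=
  by_contra fun hwF => hF.nsmul_notMem hw hwF m (hF.upward v hv _ hvw)

end IsPrimeFilter

end PrimeFilter

section LexOrder

variable {n : ℕ} {β : Fin n → Type v}

theorem lex_lt_iff [∀ i, LT (β i)] {v w : Lex (∀ i, β i)} :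
    v < w ↔ ∃ i, (∀ k < i, ofLex v k = ofLex w k) ∧ ofLex v i < ofLex w i :=
  Iff.rfl

theorem lex_pos_iff [∀ i, Zero (β i)] [∀ i, LT (β i)] {v : Lex (∀ i, β i)} :
    0 < v ↔ ∃ i, (∀ k < i, ofLex v k = 0) ∧ 0 < ofLex v i :=
  exists_congr fun _ => and_congr_left' <| forall₂_congr fun _ _ => eq_comm

theorem lex_lt_of_lead [∀ i, Zero (β i)] [∀ i, LT (β i)] {u w : Lex (∀ i, β i)} {i : Fin n}
    (hu : ∀ k ≤ i, ofLex u k = 0) (hw : ∀ k < i, ofLex w k = 0) (hwi : 0 < ofLex w i) :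
    u < w :=
  lex_lt_iff.2 ⟨i, fun k hk => by rw [hu k hk.le, hw k hk], by rwa [hu i le_rfl]⟩

theorem lead_pos_of_nonneg [∀ i, Zero (β i)] [∀ i, LinearOrder (β i)] {v : Lex (∀ i, β i)}
    (hv : 0 ≤ v) {i : Fin n} (hz : ∀ k < i, ofLex v k = 0) (hi : ofLex v i ≠ 0) : 0 < ofLex v i :=
  lt_of_le_of_ne (le_of_not_gt fun hlt => hv.not_gt (lex_lt_iff.2 ⟨i, hz, hlt⟩)) hi.symm

theorem exists_lead_le_of_ne_zero [∀ i, Zero (β i)] (v : Lex (∀ i, β i)) {i : Fin n}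
    (hi : ofLex v i ≠ 0) : ∃ i₀ ≤ i, (∀ k < i₀, ofLex v k = 0) ∧ ofLex v i₀ ≠ 0 := by
  obtain ⟨i₀, ⟨hi₀, hle⟩, hmin⟩ :=
    wellFounded_lt.has_min {k : Fin n | ofLex v k ≠ 0 ∧ k ≤ i} ⟨i, hi, le_rfl⟩
  exact ⟨i₀, hle, fun k hk => by_contra fun hk0 => hmin k ⟨hk0, (hk.trans_le hle).le⟩ hk,
    hi₀⟩

end LexOrder

section LexProduct

variable {n : ℕ} {β : Fin n → Type v} [∀ i, AddCommGroup (β i)] [∀ i, LinearOrder (β i)]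
  [∀ i, IsOrderedAddMonoid (β i)]

theorem exists_le_nsmul_of_lead [∀ i, Archimedean (β i)] {u w : Lex (∀ i, β i)} {i : Fin n}
    (hu : ∀ k < i, ofLex u k = 0) (hw : ∀ k < i, ofLex w k = 0) (hwi : 0 < ofLex w i) :
    ∃ m : ℕ, u ≤ m • w := by
  obtain ⟨m, hm⟩ := Archimedean.arch (ofLex u i) hwi
  refine ⟨m + 1, le_of_lt (lex_lt_iff.2 ⟨i, fun k hk => ?_, ?_⟩)⟩
  · change ofLex u k = (m + 1) • ofLex w k
    rw [hu k hk, hw k hk, smul_zero]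
  · change ofLex u i < (m + 1) • ofLex w i
    rw [succ_nsmul]
    exact hm.trans_lt (lt_add_of_pos_right _ hwi)

theorem mem_suppFilter_iff {j : Fin n} {v : Lex (∀ i, β i)} :
    v ∈ suppFilter β j ↔ ∃ i ≤ j, (∀ k < i, ofLex v k = 0) ∧ 0 < ofLex v i := by
  constructor
  · rintro ⟨hv, i, hij, hi⟩
    obtain ⟨i₀, hi₀, hz, hne⟩ := exists_lead_le_of_ne_zero v hi
    exact ⟨i₀, hi₀.trans hij, hz, lead_pos_of_nonneg hv hz hne⟩
  · rintro ⟨i, hij, hz, hi⟩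
    exact ⟨(lex_pos_iff.2 ⟨i, hz, hi⟩).le, i, hij, hi.ne'⟩

theorem notMem_suppFilter_iff {j : Fin n} {v : Lex (∀ i, β i)} (hv : 0 ≤ v) :
    v ∉ suppFilter β j ↔ ∀ i ≤ j, ofLex v i = 0 := by
  simp [suppFilter, hv]

theorem zero_notMem_suppFilter (j : Fin n) : (0 : Lex (∀ i, β i)) ∉ suppFilter β j :=
  (notMem_suppFilter_iff le_rfl).2 fun _ _ => rfl

theorem suppFilter_upward {j : Fin n} {v w : Lex (∀ i, β i)} (hv : v ∈ suppFilter β j)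
    (hvw : v ≤ w) : w ∈ suppFilter β j := by
  obtain ⟨i, hij, hz, hi⟩ := mem_suppFilter_iff.1 hv
  by_contra hw
  have hw0 := (notMem_suppFilter_iff (hv.1.trans hvw)).1 hw
  exact hvw.not_gt (lex_lt_of_lead (fun k hk => hw0 k (hk.trans hij)) hz hi)

theorem add_notMem_suppFilter {j : Fin n} {v w : Lex (∀ i, β i)} (hv : 0 ≤ v) (hw : 0 ≤ w)
    (hvF : v ∉ suppFilter β j) (hwF : w ∉ suppFilter β j) : v + w ∉ suppFilter β j := by
  rw [notMem_suppFilter_iff hv] at hvF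
  rw [notMem_suppFilter_iff hw] at hwF
  rw [notMem_suppFilter_iff (add_nonneg hv hw)]
  intro i hi
  change ofLex v i + ofLex w i = 0
  rw [hvF i hi, hwF i hi, add_zero]

theorem toLex_single_mem_suppFilter (j : Fin n) {c : β j} (hc : 0 < c) :
    toLex (Pi.single j c) ∈ suppFilter β j :=
  mem_suppFilter_iff.2 ⟨j, le_rfl, fun k hk => Pi.single_eq_of_ne hk.ne _, by simpa using hc⟩

theorem toLex_single_notMem_suppFilter {i j : Fin n} (hij : i < j) (c : β j) :
    toLex (Pi.single j c) ∉ suppFilter β i := fun ⟨_, _, hki, hk⟩ =>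
  hk (Pi.single_eq_of_ne (hki.trans_lt hij).ne _)

theorem isPrimeFilter_suppFilter [∀ i, Nontrivial (β i)] (j : Fin n) :
    IsPrimeFilter (suppFilter β j) where
  nonempty :=
    let ⟨_, hc⟩ := exists_zero_lt (α := β j)
    ⟨_, toLex_single_mem_suppFilter j hc⟩
  nonneg _ hv := hv.1
  upward _ hv _ hvw := suppFilter_upward hv hvw
  ne_nonneg h := zero_notMem_suppFilter j (by rw [h]; exact Set.mem_ofPred.2 le_rfl)
  add_notMem _ _ hv hw hvF hwF := add_notMem_suppFilter hv hw hvF hwF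

theorem suppFilter_injective [∀ i, Nontrivial (β i)] :
    Function.Injective (suppFilter β) := by
  suffices ∀ i j : Fin n, i < j → suppFilter β i ≠ suppFilter β j by
    intro i j h
    by_contra hij
    rcases lt_or_gt_of_ne hij with hlt | hgt
    exacts [this i j hlt h, this j i hgt h.symm]
  intro i j hij h
  obtain ⟨c, hc⟩ := exists_zero_lt (α := β j)
  exact toLex_single_notMem_suppFilter hij c (h ▸ toLex_single_mem_suppFilter j hc)

theorem IsPrimeFilter.exists_eq_suppFilter [∀ i, Archimedean (β i)]
    {F : Set (Lex (∀ i, β i))} (hF : IsPrimeFilter F) : ∃ j, F = suppFilter β j := by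
  set S := {i : Fin n | ∃ v ∈ F, (∀ k < i, ofLex v k = 0) ∧ 0 < ofLex v i}
  have hlead : ∀ v ∈ F, ∃ i ∈ S, (∀ k < i, ofLex v k = 0) ∧ 0 < ofLex v i := by
    intro v hv
    have hpos : 0 < v := (hF.nonneg v hv).lt_of_ne fun h => hF.zero_notMem (h ▸ hv)
    obtain ⟨i, hz, hi⟩ := lex_pos_iff.1 hpos
    exact ⟨i, ⟨v, hv, hz, hi⟩, hz, hi⟩
  have hSne : S.Nonempty :=
    let ⟨v, hv⟩ := hF.nonempty
    let ⟨i, hi, _⟩ := hlead v hv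
    ⟨i, hi⟩
  obtain ⟨j, ⟨u, hu, huz, huj⟩, hjmax⟩ := S.exists_max_image id S.toFinite hSne
  refine ⟨j, Set.Subset.antisymm (fun v hv => ?_) fun w hw => ?_⟩
  · obtain ⟨i, hi, hz, hvi⟩ := hlead v hv
    exact mem_suppFilter_iff.2 ⟨i, hjmax i hi, hz, hvi⟩
  obtain ⟨i, hij, hz, hwi⟩ := mem_suppFilter_iff.1 hw
  rcases hij.lt_or_eq with hlt | rfl
  · exact hF.upward u hu w (lex_lt_of_lead (fun k hk => huz k (hk.trans_lt hlt)) hz hwi).le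
  · obtain ⟨m, hm⟩ := exists_le_nsmul_of_lead huz hz hwi
    exact hF.mem_of_le_nsmul hu hw.1 hm

theorem suppFilter_add_self_iff (j : Fin n) [Nontrivial (β j)] :
    suppFilter β j + suppFilter β j = suppFilter β j ↔
      ∀ x : β j, 0 < x → ∃ y, 0 < y ∧ y < x := by
  constructor
  · intro h x hx
    by_contra! hmin
    obtain ⟨a, ha, b, hb, hab⟩ :=
      Set.mem_add.1 (h.symm ▸ toLex_single_mem_suppFilter j hx)
    -- an element of `F_j` below `a + b = single j x` vanishes below `j`, so its `j`-th
    -- coordinate is positive, hence at least `x`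
    have hlead : ∀ c ∈ suppFilter β j, c ≤ a + b → x ≤ ofLex c j := fun c hc hle => by
      have hz : ∀ k < j, ofLex c k = 0 := fun k hk =>
        (notMem_suppFilter_iff hc.1).1 (fun hck => toLex_single_notMem_suppFilter hk x
          (hab ▸ suppFilter_upward hck hle)) k le_rfl
      obtain ⟨i, hij, hzi, hci⟩ := mem_suppFilter_iff.1 hc
      rcases hij.lt_or_eq with hlt | rfl
      · exact absurd (hz i hlt) hci.ne'
      · exact hmin _ hci
    have hsum : ofLex a j + ofLex b j = x := by
      rw [← Pi.single_eq_same (M := β) j x, ← ofLex_toLex (Pi.single j x), ← hab]; rfl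
    have h2x := add_le_add (hlead a ha (le_add_of_nonneg_right hb.1))
      (hlead b hb (le_add_of_nonneg_left ha.1))
    rw [hsum] at h2x
    exact hx.not_ge (add_le_iff_nonpos_left.1 h2x)
  · intro hdense
    refine Set.Subset.antisymm ?_ fun v hv => ?_
    · rintro _ ⟨a, ha, b, hb, rfl⟩
      exact suppFilter_upward ha (le_add_of_nonneg_right hb.1)
    obtain ⟨i, hij, hz, hvi⟩ := mem_suppFilter_iff.1 hv
    obtain ⟨c, hc, hcv⟩ : ∃ c : β j, 0 < c ∧ (i = j → c < ofLex v j) := by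
      rcases hij.lt_or_eq with hlt | rfl
      · obtain ⟨c, hc⟩ := exists_zero_lt (α := β j)
        exact ⟨c, hc, fun h => absurd h hlt.ne⟩
      · obtain ⟨c, hc, hcv⟩ := hdense _ hvi
        exact ⟨c, hc, fun _ => hcv⟩
    refine sub_add_cancel v (toLex (Pi.single j c)) ▸
      Set.add_mem_add (mem_suppFilter_iff.2 ⟨i, hij, fun k hk => ?_, ?_⟩)
        (toLex_single_mem_suppFilter j hc)
    · change ofLex v k - Pi.single j c k = 0
      rw [hz k hk, Pi.single_eq_of_ne (hk.trans_le hij).ne, sub_zero]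
    · change 0 < ofLex v i - Pi.single j c i
      rcases hij.lt_or_eq with hlt | rfl
      · rwa [Pi.single_eq_of_ne hlt.ne, sub_zero]
      · rw [Pi.single_eq_same, sub_pos]
        exact hcv rfl

end LexProduct

section MixedSubgroup

variable {n : ℕ} (ℓ : ℕ) (hℓ : 2 ≤ ℓ) (idem : Fin n → Bool)

theorem one_mem_mixedSubgroup (i : Fin n) : (1 : ℚ) ∈ mixedSubgroup ℓ hℓ idem i := by
  unfold mixedSubgroup
  split
  · exact ⟨1, 0, by simp⟩
  · exact ⟨1, by simp⟩

instance (i : Fin n) : Nontrivial (mixedSubgroup ℓ hℓ idem i) :=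
  ⟨⟨⟨1, one_mem_mixedSubgroup ℓ hℓ idem i⟩, 0, by simp⟩⟩

theorem mixedSubgroup_exists_pos_lt_iff (i : Fin n) :
    (∀ x : mixedSubgroup ℓ hℓ idem i, 0 < x → ∃ y, 0 < y ∧ y < x) ↔ idem i := by
  cases hi : idem i
  · simp only [Bool.false_eq_true, iff_false, not_forall]
    refine ⟨⟨1, one_mem_mixedSubgroup ℓ hℓ idem i⟩, Subtype.coe_lt_coe.1 one_pos, ?_⟩
    rintro ⟨⟨y, hy⟩, hy0, hy1⟩
    simp only [mixedSubgroup, hi] at hy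
    obtain ⟨z, rfl⟩ := hy
    have hz0 : (0 : ℚ) < z := hy0
    have hz1 : (z : ℚ) < 1 := hy1
    norm_cast at hz0 hz1
    omega
  · simp only [iff_true]
    rintro ⟨x, hx⟩ hx0
    have hxl : x / ℓ ∈ mixedSubgroup ℓ hℓ idem i := by
      simp only [mixedSubgroup, hi] at hx ⊢
      obtain ⟨z, m, rfl⟩ := hx
      exact ⟨z, m + 1, by rw [div_div, ← pow_succ]⟩
    have hℓ1 : (1 : ℚ) < ℓ := by exact_mod_cast hℓ
    rw [← Subtype.coe_lt_coe] at hx0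
    refine ⟨⟨x / ℓ, hxl⟩, ?_, ?_⟩ <;> rw [← Subtype.coe_lt_coe]
    exacts [div_pos hx0 (one_pos.trans hℓ1), div_lt_self hx0 hℓ1]

end MixedSubgroup

theorem statement_11_general (n : ℕ) (ℓ : ℕ) (hℓ : 2 ≤ ℓ) (idem : Fin n → Bool) :
    -- each `F_j` is a prime filter in `G⁺`
    (∀ j : Fin n,
      (suppFilter (fun i => ↥(mixedSubgroup ℓ hℓ idem i)) j).Nonempty ∧
      (∀ v ∈ suppFilter (fun i => ↥(mixedSubgroup ℓ hℓ idem i)) j, 0 ≤ v) ∧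
      (∀ v ∈ suppFilter (fun i => ↥(mixedSubgroup ℓ hℓ idem i)) j, ∀ w, v ≤ w →
        w ∈ suppFilter (fun i => ↥(mixedSubgroup ℓ hℓ idem i)) j) ∧
      suppFilter (fun i => ↥(mixedSubgroup ℓ hℓ idem i)) j ≠
        {v : Lex (∀ i, ↥(mixedSubgroup ℓ hℓ idem i)) | 0 ≤ v} ∧
      (∀ v w : Lex (∀ i, ↥(mixedSubgroup ℓ hℓ idem i)), 0 ≤ v → 0 ≤ w →
        v ∉ suppFilter (fun i => ↥(mixedSubgroup ℓ hℓ idem i)) j →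
        w ∉ suppFilter (fun i => ↥(mixedSubgroup ℓ hℓ idem i)) j →
        v + w ∉ suppFilter (fun i => ↥(mixedSubgroup ℓ hℓ idem i)) j)) ∧
    -- they are pairwise distinct
    (∀ j j' : Fin n,
      suppFilter (fun i => ↥(mixedSubgroup ℓ hℓ idem i)) j =
        suppFilter (fun i => ↥(mixedSubgroup ℓ hℓ idem i)) j' → j = j') ∧
    -- every prime filter is one of the `F_j`
    (∀ F : Set (Lex (∀ i, ↥(mixedSubgroup ℓ hℓ idem i))),
      F.Nonempty → (∀ v ∈ F, 0 ≤ v) → (∀ v ∈ F, ∀ w, v ≤ w → w ∈ F) →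
      F ≠ {v : Lex (∀ i, ↥(mixedSubgroup ℓ hℓ idem i)) | 0 ≤ v} →
      (∀ v w : Lex (∀ i, ↥(mixedSubgroup ℓ hℓ idem i)), 0 ≤ v → 0 ≤ w →
        v ∉ F → w ∉ F → v + w ∉ F) →
      ∃ j : Fin n, F = suppFilter (fun i => ↥(mixedSubgroup ℓ hℓ idem i)) j) ∧
    -- `F_j` is idempotent iff `idem j = 1`
    (∀ j : Fin n,
      (suppFilter (fun i => ↥(mixedSubgroup ℓ hℓ idem i)) j +
          suppFilter (fun i => ↥(mixedSubgroup ℓ hℓ idem i)) j =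
        suppFilter (fun i => ↥(mixedSubgroup ℓ hℓ idem i)) j) ↔ idem j = true) := by
  refine ⟨fun j => ?_, fun j j' h => suppFilter_injective h,
    fun F h₁ h₂ h₃ h₄ h₅ => IsPrimeFilter.exists_eq_suppFilter ⟨h₁, h₂, h₃, h₄, h₅⟩,
    fun j => (suppFilter_add_self_iff j).trans
      (mixedSubgroup_exists_pos_lt_iff ℓ hℓ idem j)⟩
  have hF := isPrimeFilter_suppFilter (β := fun i => ↥(mixedSubgroup ℓ hℓ idem i)) j
  exact ⟨hF.nonempty, hF.nonneg, hF.upward, hF.ne_nonneg, hF.add_notMem⟩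

/-- Let `n ≥ 1`, `ℓ ≥ 2` and `idem : {1,…,n} → {0,1}` any map.  With
`G_i = ℤ` if `idem i = 0` and `G_i = ℤ[1/ℓ]` if `idem i = 1`, let
`G = G₁ ×ₗ ⋯ ×ₗ Gₙ` be the lexicographic product.  Then the prime filters in `G⁺` are
exactly the pairwise distinct sets `F₁, …, Fₙ`, and `F_j` is idempotent if and only if
`idem j = 1`. -/
theorem statement_11 (n : ℕ) (hn : 1 ≤ n) (ℓ : ℕ) (hℓ : 2 ≤ ℓ) (idem : Fin n → Bool) :
    -- each `F_j` is a prime filter in `G⁺`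
    (∀ j : Fin n,
      (suppFilter (fun i => ↥(mixedSubgroup ℓ hℓ idem i)) j).Nonempty ∧
      (∀ v ∈ suppFilter (fun i => ↥(mixedSubgroup ℓ hℓ idem i)) j, 0 ≤ v) ∧
      (∀ v ∈ suppFilter (fun i => ↥(mixedSubgroup ℓ hℓ idem i)) j, ∀ w, v ≤ w →
        w ∈ suppFilter (fun i => ↥(mixedSubgroup ℓ hℓ idem i)) j) ∧
      suppFilter (fun i => ↥(mixedSubgroup ℓ hℓ idem i)) j ≠
        {v : Lex (∀ i, ↥(mixedSubgroup ℓ hℓ idem i)) | 0 ≤ v} ∧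
      (∀ v w : Lex (∀ i, ↥(mixedSubgroup ℓ hℓ idem i)), 0 ≤ v → 0 ≤ w →
        v ∉ suppFilter (fun i => ↥(mixedSubgroup ℓ hℓ idem i)) j →
        w ∉ suppFilter (fun i => ↥(mixedSubgroup ℓ hℓ idem i)) j →
        v + w ∉ suppFilter (fun i => ↥(mixedSubgroup ℓ hℓ idem i)) j)) ∧
    -- they are pairwise distinct
    (∀ j j' : Fin n,
      suppFilter (fun i => ↥(mixedSubgroup ℓ hℓ idem i)) j =
        suppFilter (fun i => ↥(mixedSubgroup ℓ hℓ idem i)) j' → j = j') ∧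
    -- every prime filter is one of the `F_j`
    (∀ F : Set (Lex (∀ i, ↥(mixedSubgroup ℓ hℓ idem i))),
      F.Nonempty → (∀ v ∈ F, 0 ≤ v) → (∀ v ∈ F, ∀ w, v ≤ w → w ∈ F) →
      F ≠ {v : Lex (∀ i, ↥(mixedSubgroup ℓ hℓ idem i)) | 0 ≤ v} →
      (∀ v w : Lex (∀ i, ↥(mixedSubgroup ℓ hℓ idem i)), 0 ≤ v → 0 ≤ w →
        v ∉ F → w ∉ F → v + w ∉ F) →
      ∃ j : Fin n, F = suppFilter (fun i => ↥(mixedSubgroup ℓ hℓ idem i)) j) ∧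
    -- `F_j` is idempotent iff `idem j = 1`
    (∀ j : Fin n,
      (suppFilter (fun i => ↥(mixedSubgroup ℓ hℓ idem i)) j +
          suppFilter (fun i => ↥(mixedSubgroup ℓ hℓ idem i)) j =
        suppFilter (fun i => ↥(mixedSubgroup ℓ hℓ idem i)) j) ↔ idem j = true) :=
  statement_11_general n ℓ hℓ idem
end

section
/- Let n ≥ 1. Then Σ_{k=0}^{n+1} N_k = fib(2n+3), where N_k denotes the number of 2k-tuples (i₁, j₁, …, i_k, j_k) of natural numbers with i₁ ≤ j₁ < i₂ ≤ j₂ < ⋯ < i_k ≤ j_k ≤ n (so N₀ = 1, counting the empty tuple), and fib is the Fibonacci sequence with fib(0) = 0, fib(1) = 1, fib(m+2) = fib(m+1) + fib(m). -/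
/-!
Moving the `t`-th interval `[i, j]` of a chain (counting from `t = 0`) to the pair
`i + t < j + t + 1` turns a chain of `k` intervals in `[0, n]` into a strictly increasing
sequence of `2k` numbers in `[0, n + k]`, and every such sequence arises exactly once; hence
`N_k = C(n + k + 1, 2k)`. The sum `∑ₖ C(n + 1 + k, n + 1 - k)` runs along a shallow diagonal of
Pascal's triangle, and these diagonals sum to Fibonacci numbers.
-/

open Finset

theorem sum_range_choose_eq_fib (n : ℕ) :
    ∑ k ∈ range (n + 2), (n + k + 1).choose (2 * k) = Nat.fib (2 * n + 3) := by
  rw [Nat.fib_succ_eq_sum_choose, Nat.sum_antidiagonal_eq_sum_range_succ (fun a b => a.choose b),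
    show (2 * n + 2).succ = (n + 1) + (n + 2) by omega, sum_range_add _ (n + 1)]
  have below : ∀ a ∈ range (n + 1), a.choose (2 * n + 2 - a) = 0 := fun a ha =>
    Nat.choose_eq_zero_of_lt (by rw [mem_range] at ha; omega)
  rw [sum_eq_zero below, zero_add]
  refine sum_congr rfl fun k hk => ?_
  rw [mem_range] at hk
  rw [show n + 1 + k = n + k + 1 by omega]
  exact Nat.choose_symm_of_eq_add (by omega)

namespace Fin

theorem strictMono_of_lt_of_val_eq_succ {m : ℕ} {α : Type*} [Preorder α] {g : Fin m → α}
    (h : ∀ s s' : Fin m, s'.1 = s.1 + 1 → g s < g s') : StrictMono g := by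
  cases m with
  | zero => exact fun a => a.elim0
  | succ m => exact Fin.strictMono_iff_lt_succ.2 fun i => h _ _ (by simp)

variable {m N : ℕ} (g : Fin m ↪o Fin N)

theorem val_apply_add_sub_le {s s' : Fin m} (h : s ≤ s') :
    (g s).1 + (s'.1 - s.1) ≤ (g s').1 := by
  have hsub : (Icc s s').map g.toEmbedding ⊆ Icc (g s) (g s') := by
    intro x hx
    simp only [mem_map, mem_Icc] at hx ⊢
    obtain ⟨y, ⟨h1, h2⟩, rfl⟩ := hx
    exact ⟨g.monotone h1, g.monotone h2⟩
  have hcard := card_le_card hsub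
  rw [card_map, Fin.card_Icc, Fin.card_Icc] at hcard
  have hmono := Fin.le_def.1 (g.monotone h)
  rw [Fin.le_def] at h
  omega

theorem le_val_apply (s : Fin m) : s.1 ≤ (g s).1 := by
  have := val_apply_add_sub_le g (show ⟨0, s.pos⟩ ≤ s from Fin.le_def.2 (Nat.zero_le _))
  simp only at this
  omega

theorem val_apply_add_le (s : Fin m) : (g s).1 + m ≤ N + s.1 := by
  have hs := s.2
  have hlast :=
    val_apply_add_sub_le g (show s ≤ ⟨m - 1, by omega⟩ from Fin.le_def.2 (by simp; omega))
  have := (g ⟨m - 1, by omega⟩).2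
  simp only at hlast
  omega

end Fin

def intervalChains (n k : ℕ) : Set (Fin k → ℕ × ℕ) :=
  {f | (∀ t, (f t).1 ≤ (f t).2 ∧ (f t).2 ≤ n) ∧
    ∀ (t : ℕ) (h : t + 1 < k), (f ⟨t, Nat.lt_of_succ_lt h⟩).2 < (f ⟨t + 1, h⟩).1}

namespace intervalChains

variable {n k : ℕ}

theorem snd_lt_fst {f : Fin k → ℕ × ℕ} (hf : f ∈ intervalChains n k) {t t' : Fin k}
    (h : t'.1 = t.1 + 1) : (f t).2 < (f t').1 := by
  obtain ⟨t', ht'⟩ := t'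
  subst h
  exact hf.2 t ht'

def leftIdx (t : Fin k) : Fin (2 * k) := ⟨2 * t, by omega⟩

def rightIdx (t : Fin k) : Fin (2 * k) := ⟨2 * t + 1, by omega⟩

@[simp] theorem val_leftIdx (t : Fin k) : (leftIdx t).1 = 2 * t := rfl

@[simp] theorem val_rightIdx (t : Fin k) : (rightIdx t).1 = 2 * t + 1 := rfl

theorem exists_eq_leftIdx_or_eq_rightIdx (s : Fin (2 * k)) :
    ∃ t : Fin k, s = leftIdx t ∨ s = rightIdx t :=
  ⟨⟨s / 2, by omega⟩, by
    rcases Nat.even_or_odd' s.1 with ⟨t, h | h⟩ <;> simp [Fin.ext_iff] <;> omega⟩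

def shift (f : Fin k → ℕ × ℕ) (s : Fin (2 * k)) : ℕ :=
  (if s.1 % 2 = 0 then (f ⟨s / 2, by omega⟩).1 else (f ⟨s / 2, by omega⟩).2) + (s.1 + 1) / 2

@[simp] theorem shift_leftIdx (f : Fin k → ℕ × ℕ) (t : Fin k) :
    shift f (leftIdx t) = (f t).1 + t := by
  have h : (2 * t.1 + 1) / 2 = t := by omega
  simp [shift, h]

@[simp] theorem shift_rightIdx (f : Fin k → ℕ × ℕ) (t : Fin k) :
    shift f (rightIdx t) = (f t).2 + t + 1 := by
  have h₁ : (2 * t.1 + 1) / 2 = t := by omega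
  have h₂ : (2 * t.1 + 1 + 1) / 2 = t + 1 := by omega
  simp [shift, h₁, h₂, add_assoc]

theorem strictMono_shift {f : Fin k → ℕ × ℕ} (hf : f ∈ intervalChains n k) :
    StrictMono (shift f) := by
  refine Fin.strictMono_of_lt_of_val_eq_succ fun s s' hs' => ?_
  obtain ⟨t, rfl | rfl⟩ := exists_eq_leftIdx_or_eq_rightIdx s
  · obtain rfl : s' = rightIdx t := Fin.ext (by simpa using hs')
    simpa using (hf.1 t).1
  · have ht : t.1 + 1 < k := by have := s'.2; simp at hs'; omega
    obtain rfl : s' = leftIdx ⟨t + 1, ht⟩ := Fin.ext (by simp at hs' ⊢; omega)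
    have := snd_lt_fst hf (t' := ⟨t + 1, ht⟩) rfl
    simp only [shift_leftIdx, shift_rightIdx]
    omega

theorem shift_lt {f : Fin k → ℕ × ℕ} (hf : f ∈ intervalChains n k) (s : Fin (2 * k)) :
    shift f s < n + k + 1 := by
  obtain ⟨t, rfl | rfl⟩ := exists_eq_leftIdx_or_eq_rightIdx s <;> simp <;> grind [hf.1 t]

def shiftEmb {f : Fin k → ℕ × ℕ} (hf : f ∈ intervalChains n k) :
    Fin (2 * k) ↪o Fin (n + k + 1) :=
  OrderEmbedding.ofStrictMono (fun s => ⟨shift f s, shift_lt hf s⟩)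
    fun _ _ h => strictMono_shift hf h

@[simp] theorem val_shiftEmb {f : Fin k → ℕ × ℕ} (hf : f ∈ intervalChains n k)
    (s : Fin (2 * k)) : (shiftEmb hf s).1 = shift f s := rfl

def unshift (g : Fin (2 * k) ↪o Fin (n + k + 1)) (t : Fin k) : ℕ × ℕ :=
  ((g (leftIdx t)).1 - t, (g (rightIdx t)).1 - t - 1)

theorem unshift_mem (g : Fin (2 * k) ↪o Fin (n + k + 1)) : unshift g ∈ intervalChains n k := by
  refine ⟨fun t => ?_, fun t ht => ?_⟩
  · have hlt : g (leftIdx t) < g (rightIdx t) := g.lt_iff_lt.2 (Fin.lt_def.2 (by simp))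
    have := Fin.le_val_apply g (leftIdx t)
    have := Fin.val_apply_add_le g (rightIdx t)
    simp only [unshift, val_leftIdx, val_rightIdx, Fin.lt_def] at *
    omega
  · have hlt : g (rightIdx ⟨t, by omega⟩) < g (leftIdx ⟨t + 1, ht⟩) :=
      g.lt_iff_lt.2 (Fin.lt_def.2 (by simp; omega))
    have := Fin.le_val_apply g (rightIdx ⟨t, by omega⟩)
    simp only [unshift, val_rightIdx, Fin.lt_def] at *
    omega

def equivOrderEmbedding (n k : ℕ) :
    intervalChains n k ≃ (Fin (2 * k) ↪o Fin (n + k + 1)) where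
  toFun f := shiftEmb f.2
  invFun g := ⟨unshift g, unshift_mem g⟩
  left_inv f := Subtype.ext <| funext fun t => by
    simp only [unshift, val_shiftEmb, shift_leftIdx, shift_rightIdx, Prod.ext_iff]
    omega
  right_inv g := by
    ext s
    obtain ⟨t, rfl | rfl⟩ := exists_eq_leftIdx_or_eq_rightIdx s
    · have := Fin.le_val_apply g (leftIdx t)
      simp only [val_shiftEmb, shift_leftIdx, unshift, val_leftIdx] at *
      omega
    · have := Fin.le_val_apply g (rightIdx t)
      simp only [val_shiftEmb, shift_rightIdx, unshift, val_rightIdx] at *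
      omega

theorem ncard_eq_choose (n k : ℕ) : (intervalChains n k).ncard = (n + k + 1).choose (2 * k) := by
  rw [← Nat.card_coe_set_eq, Nat.card_congr (equivOrderEmbedding n k),
    Nat.card_congr Set.powersetCard.ofFinEmbEquiv, Set.powersetCard.card, Nat.card_fin]

end intervalChains

/-- Let `n ≥ 1`.  Then `Σ_{k=0}^{n+1} N_k = fib (2n+3)`, where `N_k` is
the number of `2k`-tuples `(i₁, j₁, …, i_k, j_k)` of natural numbers with
`i₁ ≤ j₁ < i₂ ≤ j₂ < ⋯ < i_k ≤ j_k ≤ n` (so `N₀ = 1`, counting the empty tuple), and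
`fib` is the Fibonacci sequence. -/
theorem statement_15 (n : ℕ) :
    (∑ k ∈ Finset.range (n + 2),
        Set.ncard {f : Fin k → ℕ × ℕ |
          (∀ t, (f t).1 ≤ (f t).2 ∧ (f t).2 ≤ n) ∧
          ∀ (t : ℕ) (h : t + 1 < k), (f ⟨t, by omega⟩).2 < (f ⟨t + 1, h⟩).1}) =
      Nat.fib (2 * n + 3) := by
  rw [← sum_range_choose_eq_fib n]
  exact sum_congr rfl fun k _ => intervalChains.ncard_eq_choose n k
end

section
/- Let R be a valuation domain and let C be a nonempty chain of prime ideals of R (totally ordered by inclusion) having no greatest element. Then p = ⋃_{q ∈ C} q is a prime ideal of R and p is idempotent: p·p = p. -/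
/-!
The union `p` of a directed family of primes is prime. For idempotence, take `x ∈ q ∈ C` and,
since `C` has no greatest element, some `t ∈ q' \ q` with `q' ∈ C`. In a valuation ring `t ∣ x`
(the other divisibility would put `t` in `q`), so `x = t * s` with `s ∈ q` because `q` is prime
and `t ∉ q`; hence `x ∈ q' * q ≤ p * p`.
-/

universe u

namespace Ideal

variable {R : Type*} [CommSemiring R]

theorem isPrime_sSup_of_directedOn {C : Set (Ideal R)} (hne : C.Nonempty)
    (hdir : DirectedOn (· ≤ ·) C) (hprime : ∀ q ∈ C, q.IsPrime) : (sSup C).IsPrime := by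
  have hmem (x : R) : x ∈ sSup C ↔ ∃ q ∈ C, x ∈ q := Submodule.mem_sSup_of_directed hne hdir
  refine ⟨fun htop => ?_, fun {x y} hxy => ?_⟩
  · obtain ⟨q, hq, hone⟩ := (hmem 1).mp (htop ▸ Submodule.mem_top)
    exact (hprime q hq).ne_top ((eq_top_iff_one q).mpr hone)
  · obtain ⟨q, hq, hxyq⟩ := (hmem (x * y)).mp hxy
    exact ((hprime q hq).mem_or_mem hxyq).imp (le_sSup hq ·) (le_sSup hq ·)

theorem le_mul_of_lt [PreValuationRing R] {q q' : Ideal R} [hq : q.IsPrime] (hlt : q < q') :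
    q ≤ q' * q := by
  intro x hx
  obtain ⟨t, htq', htq⟩ := Set.exists_of_ssubset hlt
  rcases ValuationRing.dvd_total t x with ⟨s, rfl⟩ | ⟨s, rfl⟩
  · have hs : s ∈ q := (hq.mem_or_mem hx).resolve_left htq
    exact mul_mem_mul htq' hs
  · exact absurd (mul_mem_right s q hx) htq

end Ideal

theorem statement_17_general (R : Type u) [CommRing R]
    (hchain : ∀ I J : Ideal R, I ≤ J ∨ J ≤ I)
    (C : Set (Ideal R)) (hne : C.Nonempty) (hprime : ∀ q ∈ C, q.IsPrime)
    (hnomax : ∀ q ∈ C, ∃ q' ∈ C, q < q') :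
    ∃ p : Ideal R, (∀ x : R, x ∈ p ↔ ∃ q ∈ C, x ∈ q) ∧ p.IsPrime ∧ p * p = p := by
  have : PreValuationRing R := PreValuationRing.iff_ideal_total.mpr ⟨hchain⟩
  have hdir : DirectedOn (· ≤ ·) C := fun I hI J hJ =>
    (hchain I J).elim (fun h => ⟨J, hJ, h, le_rfl⟩) (fun h => ⟨I, hI, le_rfl, h⟩)
  have hmem (x : R) : x ∈ sSup C ↔ ∃ q ∈ C, x ∈ q := Submodule.mem_sSup_of_directed hne hdir
  refine ⟨sSup C, hmem, Ideal.isPrime_sSup_of_directedOn hne hdir hprime,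
    le_antisymm Ideal.mul_le_right fun x hx => ?_⟩
  obtain ⟨q, hq, hxq⟩ := (hmem x).mp hx
  obtain ⟨q', hq', hlt⟩ := hnomax q hq
  have := hprime q hq
  exact Ideal.mul_mono (le_sSup hq') (le_sSup hq) (Ideal.le_mul_of_lt hlt hxq)

/-- Let `R` be a valuation domain and `C` a nonempty chain of prime
ideals of `R` having no greatest element.  Then `p = ⋃_{q ∈ C} q` is a prime ideal of `R`
and `p` is idempotent: `p·p = p`. -/
theorem statement_17 (R : Type u) [CommRing R] [IsDomain R]
    (hchain : ∀ I J : Ideal R, I ≤ J ∨ J ≤ I)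
    (C : Set (Ideal R)) (hne : C.Nonempty) (hprime : ∀ q ∈ C, q.IsPrime)
    (hnomax : ∀ q ∈ C, ∃ q' ∈ C, q < q') :
    ∃ p : Ideal R, (∀ x : R, x ∈ p ↔ ∃ q ∈ C, x ∈ q) ∧ p.IsPrime ∧ p * p = p :=
  statement_17_general R hchain C hne hprime hnomax
end
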